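/- arXiv:1311.4803 — 3 statements merged into one kernel-verified Lean document; each statement's English description precedes it below -/
import Mathlib

section
/- Let d ≥ 1 and work in the Euclidean space ℝ^d. Let w_k ∈ ℝ^d be a unit vector, let x ∈ ℝ^d be nonzero, and let r be a real number with 0 < r ≤ 1. Then there exists a unit vector w with ‖w − w_k‖ ≤ r and ⟨w, x⟩·⟨w_k, x⟩ ≤ 0 if and only if |⟨x, w_k⟩| / ‖x‖ ≤ r·√(1 − r²/4). -/
open RealInnerProductSpace

set_option maxHeartbeats 1000000

theorem stmt_0 (d : ℕ) (hd : 1 ≤ d)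
    (wk x : EuclideanSpace ℝ (Fin d)) (hwk : ‖wk‖ = 1) (hx : x ≠ 0)
    (r : ℝ) (hr0 : 0 < r) (hr1 : r ≤ 1) :
    (∃ w : EuclideanSpace ℝ (Fin d), ‖w‖ = 1 ∧ ‖w - wk‖ ≤ r ∧ ⟪w, x⟫ * ⟪wk, x⟫ ≤ 0) ↔
      |⟪x, wk⟫| / ‖x‖ ≤ r * Real.sqrt (1 - r^2 / 4) := by
  have hX : (0:ℝ) < ‖x‖ := norm_pos_iff.mpr hx
  obtain ⟨T, hT⟩ : ∃ T : ℝ, T = ⟪x, wk⟫ := ⟨_, rfl⟩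
  obtain ⟨c, hc⟩ : ∃ c : ℝ, c = 1 - r^2/2 := ⟨_, rfl⟩
  have hc0 : (1:ℝ)/2 ≤ c := by rw [hc]; nlinarith
  have hq0 : (0:ℝ) ≤ 1 - r^2/4 := by nlinarith
  obtain ⟨S, hS⟩ : ∃ S : ℝ, S = r * Real.sqrt (1 - r^2/4) := ⟨_, rfl⟩
  have hS0 : 0 ≤ S := by rw [hS]; exact mul_nonneg hr0.le (Real.sqrt_nonneg _)
  have hS2 : S^2 = 1 - c^2 := by
    rw [hS, mul_pow, Real.sq_sqrt hq0, hc]; ring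
  rw [← hT, ← hS]
  constructor
  · rintro ⟨w, hw1, hwr, hwx⟩
    obtain ⟨a, ha⟩ : ∃ a : ℝ, a = ⟪w, wk⟫ := ⟨_, rfl⟩
    obtain ⟨P, hP⟩ : ∃ P : ℝ, P = ⟪w, x⟫ := ⟨_, rfl⟩
    have hsub : ‖w - wk‖^2 = 2 - 2*a := by
      rw [@norm_sub_sq_real, hw1, hwk, ha]; ring
    have hwr2 : ‖w - wk‖^2 ≤ r^2 := by
      have := norm_nonneg (w - wk)
      nlinarith
    have hac : c ≤ a := by rw [hc]; nlinarith
    have hwx' : P * T ≤ 0 := by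
      rw [hP, hT, real_inner_comm wk x]; exact hwx
    have e1 : ⟪w - a • wk, x - T • wk⟫ = P - a*T := by
      simp only [inner_sub_left, inner_sub_right, real_inner_smul_left,
        real_inner_smul_right, real_inner_self_eq_norm_sq, hwk]
      rw [real_inner_comm x wk, ← hT, ← ha, ← hP]; ring
    have e2 : ⟪w - a • wk, w - a • wk⟫ = 1 - a^2 := by
      simp only [inner_sub_left, inner_sub_right, real_inner_smul_left,
        real_inner_smul_right, real_inner_self_eq_norm_sq, hwk, hw1,
        norm_smul, Real.norm_eq_abs, mul_one, mul_pow, sq_abs]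
      rw [real_inner_comm w wk, ← ha]; ring
    have e3 : ⟪x - T • wk, x - T • wk⟫ = ‖x‖^2 - T^2 := by
      simp only [inner_sub_left, inner_sub_right, real_inner_smul_left,
        real_inner_smul_right, real_inner_self_eq_norm_sq, hwk,
        norm_smul, Real.norm_eq_abs, mul_one, mul_pow, sq_abs]
      rw [real_inner_comm x wk, ← hT]; ring
    have CS : (P - a*T)^2 ≤ (1 - a^2) * (‖x‖^2 - T^2) := by
      have h := real_inner_mul_inner_self_le (w - a • wk) (x - T • wk)
      rw [e1, e2, e3] at h
      nlinarith [h]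
    have ha0 : (0:ℝ) ≤ a := by linarith
    have k1 : 0 ≤ a * (-(P*T)) := mul_nonneg ha0 (by linarith)
    have k2 : c*c ≤ a*a := mul_self_le_mul_self (by linarith) hac
    have step1 : T^2 ≤ (1 - a^2) * ‖x‖^2 := by nlinarith [CS, k1, sq_nonneg P]
    have step2 : (1 - a^2) * ‖x‖^2 ≤ S^2 * ‖x‖^2 := by
      nlinarith [k2, sq_nonneg ‖x‖, hS2]
    have hT2 : T^2 ≤ S^2 * ‖x‖^2 := le_trans step1 step2
    rw [div_le_iff₀ hX]
    nlinarith [sq_abs T, abs_nonneg T, mul_nonneg hS0 hX.le, hT2]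
  · intro h
    rw [div_le_iff₀ hX] at h
    have hT2 : T^2 ≤ S^2 * ‖x‖^2 := by
      nlinarith [sq_abs T, abs_nonneg T, mul_self_le_mul_self (abs_nonneg T) h]
    have hyw : ⟪x - T • wk, wk⟫ = 0 := by
      simp only [inner_sub_left, real_inner_smul_left, real_inner_self_eq_norm_sq, hwk]
      rw [← hT]; ring
    have hy2 : ‖x - T • wk‖^2 = ‖x‖^2 - T^2 := by
      rw [@norm_sub_sq_real, real_inner_smul_right, ← hT, norm_smul, hwk]
      simp only [mul_pow, sq_abs, Real.norm_eq_abs, mul_one]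
      ring
    have hS34 : S^2 ≤ 3/4 := by nlinarith
    have hny : (0:ℝ) < ‖x - T • wk‖ := by
      rcases (norm_nonneg (x - T • wk)).lt_or_eq with h' | h'
      · exact h'
      · exfalso
        have hz : ‖x - T • wk‖^2 = 0 := by rw [← h']; ring
        nlinarith
    obtain ⟨σ, hσT, hσ2⟩ : ∃ σ : ℝ, σ * T = |T| ∧ σ^2 = 1 := by
      by_cases hTs : 0 ≤ T
      · exact ⟨1, by rw [abs_of_nonneg hTs]; ring, by ring⟩
      · push_neg at hTs
        exact ⟨-1, by rw [abs_of_neg hTs]; ring, by ring⟩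
    obtain ⟨N, hN⟩ : ∃ N : ℝ, N = ‖x - T • wk‖ := ⟨_, rfl⟩
    have hN0 : 0 < N := hN ▸ hny
    have hN2 : N^2 = ‖x‖^2 - T^2 := by rw [hN]; exact hy2
    have hNne : N ≠ 0 := hN0.ne'
    have hywk : ⟪wk, x - T • wk⟫ = 0 := by
      rw [real_inner_comm (x - T • wk) wk]; exact hyw
    have hE : ((σ * S)/N)^2 * N^2 = S^2 := by
      rw [div_pow, div_mul_cancel₀ _ (pow_ne_zero 2 hNne), mul_pow, hσ2, one_mul]
    have hw2 : ‖c • wk - ((σ * S)/N) • (x - T • wk)‖^2 = 1 := by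
      rw [@norm_sub_sq_real, real_inner_smul_left, real_inner_smul_right, hywk,
        norm_smul, norm_smul, hwk, ← hN]
      simp only [mul_pow, sq_abs, Real.norm_eq_abs, mul_one, mul_zero, sub_zero]
      rw [hE]; linarith [hS2]
    have iwk : ⟪c • wk - ((σ * S)/N) • (x - T • wk), wk⟫ = c := by
      rw [inner_sub_left, real_inner_smul_left, real_inner_smul_left,
        real_inner_self_eq_norm_sq, hwk, hyw]
      ring
    have iyx : ⟪x - T • wk, x⟫ = N^2 := by
      rw [inner_sub_left, real_inner_smul_left, real_inner_self_eq_norm_sq,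
        real_inner_comm x wk, ← hT, hN2]
      ring
    have iwx : ⟪c • wk - ((σ * S)/N) • (x - T • wk), x⟫ = c*T - σ*S*N := by
      rw [inner_sub_left, real_inner_smul_left, real_inner_smul_left, iyx,
        real_inner_comm x wk, ← hT]
      field_simp
    refine ⟨c • wk - ((σ * S)/N) • (x - T • wk), ?_, ?_, ?_⟩
    · rw [← Real.sqrt_sq (norm_nonneg _), hw2, Real.sqrt_one]
    · have hd2 : ‖c • wk - ((σ * S)/N) • (x - T • wk) - wk‖^2 = r^2 := by
        rw [@norm_sub_sq_real, hw2, iwk, hwk, hc]; ring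
      rw [← Real.sqrt_sq (norm_nonneg _), hd2, Real.sqrt_sq hr0.le]
    · rw [iwx, real_inner_comm x wk, ← hT]
      have e3 : S^2*‖x‖^2 = (1-c^2)*‖x‖^2 := by rw [hS2]
      have h4 : T^2 ≤ (1-c^2)*‖x‖^2 := e3 ▸ hT2
      have ksq : (c*|T|)^2 ≤ (S*N)^2 := by
        rw [mul_pow, mul_pow, sq_abs, hS2, hN2]
        nlinarith [h4]
      have key : c*|T| ≤ S*N := by
        have h1 := Real.sqrt_le_sqrt ksq
        rwa [Real.sqrt_sq (mul_nonneg (by linarith) (abs_nonneg T)),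
          Real.sqrt_sq (mul_nonneg hS0 hN0.le)] at h1
      have expand : (c*T - σ*S*N)*T = c*T^2 - |T| * (S*N) := by
        rw [← hσT]; ring
      rw [expand]
      have h6 : c*T^2 = (c*|T|) * |T| := by rw [← sq_abs T]; ring
      have k5 : c*T^2 ≤ (S*N) * |T| := by
        rw [h6]; exact mul_le_mul_of_nonneg_right key (abs_nonneg T)
      linarith [k5]
end

section
/- Let d ≥ 2 and let Q be an orthogonally invariant probability measure on ℝ^d with Q({0}) = 0. Then for all nonzero u, v ∈ ℝ^d, Q{x : ⟨u, x⟩·⟨v, x⟩ < 0} = θ(u, v)/π. -/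
open MeasureTheory RealInnerProductSpace

abbrev Euc (d : ℕ) := EuclideanSpace ℝ (Fin d)

-- Lemma C: map orthonormal families to each other by a global isometry
lemma lemC {d m : ℕ} (hm : m ≤ d) (f g : Fin m → EuclideanSpace ℝ (Fin d))
    (hf : Orthonormal ℝ f) (hg : Orthonormal ℝ g) :
    ∃ T : EuclideanSpace ℝ (Fin d) ≃ₗᵢ[ℝ] EuclideanSpace ℝ (Fin d), ∀ i, T (f i) = g i := by
  have hcard : Module.finrank ℝ (EuclideanSpace ℝ (Fin d)) = Fintype.card (Fin d) := by simp
  set s : Set (Fin d) := {i | (i : ℕ) < m} with hs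
  have hext : ∀ (F : Fin m → EuclideanSpace ℝ (Fin d)), Orthonormal ℝ F →
      ∃ b : OrthonormalBasis (Fin d) ℝ (EuclideanSpace ℝ (Fin d)),
        ∀ i : Fin m, b ⟨i, lt_of_lt_of_le i.2 hm⟩ = F i := by
    intro F hF
    set F' : Fin d → EuclideanSpace ℝ (Fin d) :=
      fun i => if h : (i : ℕ) < m then F ⟨i, h⟩ else 0 with hF'
    have horth : Orthonormal ℝ (s.restrict F') := by
      rw [orthonormal_iff_ite]
      rintro ⟨i, hi⟩ ⟨j, hj⟩
      have hi' : (i : ℕ) < m := hi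
      have hj' : (j : ℕ) < m := hj
      simp only [Set.restrict_apply, hF', dif_pos hi', dif_pos hj']
      show ⟪(if h : (i:ℕ) < m then F ⟨i, h⟩ else 0), (if h : (j:ℕ) < m then F ⟨j, h⟩ else 0)⟫ = _
      rw [dif_pos hi', dif_pos hj']
      rw [orthonormal_iff_ite.mp hF]
      congr 1
      simp [Fin.ext_iff, Subtype.ext_iff]
    obtain ⟨b, hb⟩ := horth.exists_orthonormalBasis_extension_of_card_eq hcard
    refine ⟨b, fun i => ?_⟩
    have := hb ⟨i, lt_of_lt_of_le i.2 hm⟩ (by exact i.2)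
    rw [this]
    simp [hF']
  obtain ⟨bf, hbf⟩ := hext f hf
  obtain ⟨bg, hbg⟩ := hext g hg
  refine ⟨bf.repr.trans bg.repr.symm, fun i => ?_⟩
  have : bf.repr (bf ⟨i, lt_of_lt_of_le i.2 hm⟩) = EuclideanSpace.single ⟨i, lt_of_lt_of_le i.2 hm⟩ 1 :=
    bf.repr_self _
  simp only [LinearIsometryEquiv.trans_apply, ← hbf i, this]
  rw [show (EuclideanSpace.single (⟨i, lt_of_lt_of_le i.2 hm⟩ : Fin d) (1:ℝ)) = bg.repr (bg ⟨i, lt_of_lt_of_le i.2 hm⟩) from (bg.repr_self _).symm]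
  simp [hbg i]

noncomputable def ee {d : ℕ} (i : Fin d) : Euc d := EuclideanSpace.single i 1

lemma inner_ee {d : ℕ} (i j : Fin d) : ⟪ee i, ee j⟫ = if i = j then (1:ℝ) else 0 := by
  simp [ee, EuclideanSpace.inner_single_left, EuclideanSpace.single_apply, eq_comm]

lemma orth_ee {d : ℕ} : Orthonormal ℝ (ee (d := d)) := by
  rw [orthonormal_iff_ite]; intro i j; rw [inner_ee]

lemma meas_inner_zero {d : ℕ} (w : Euc d) : MeasurableSet {x : Euc d | ⟪w, x⟫ = 0} := by
  have h : Continuous fun x : Euc d => ⟪w, x⟫ := Continuous.inner continuous_const continuous_id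
  exact measurableSet_eq_fun h.measurable measurable_const

lemma meas_inner_lt {d : ℕ} (w v : Euc d) : MeasurableSet {x : Euc d | ⟪w, x⟫ * ⟪v, x⟫ < 0} := by
  have h : Continuous fun x : Euc d => ⟪w, x⟫ * ⟪v, x⟫ :=
    (Continuous.inner continuous_const continuous_id).mul
      (Continuous.inner continuous_const continuous_id)
  exact measurableSet_lt h.measurable measurable_const

lemma Qpre {d : ℕ} (Q : Measure (Euc d)) (hinv : ∀ f : Euc d ≃ₗᵢ[ℝ] Euc d, Q.map f = Q)
    (T : Euc d ≃ₗᵢ[ℝ] Euc d) {A : Set (Euc d)} (hA : MeasurableSet A) :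
    Q (T ⁻¹' A) = Q A := by
  conv_rhs => rw [← hinv T]
  rw [Measure.map_apply T.continuous.measurable hA]

def ZZ (d k : ℕ) : Set (Euc d) := {x | ∀ i : Fin d, (i : ℕ) < k → ⟪ee i, x⟫ = 0}

lemma meas_ZZ (d k : ℕ) : MeasurableSet (ZZ d k) := by
  have : ZZ d k = ⋂ (i : Fin d) (_ : (i:ℕ) < k), {x : Euc d | ⟪ee i, x⟫ = 0} := by
    ext x; simp [ZZ]
  rw [this]
  exact MeasurableSet.iInter fun i => MeasurableSet.iInter fun _ => meas_inner_zero _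

lemma S_transport {d : ℕ} (T : Euc d ≃ₗᵢ[ℝ] Euc d) {m : ℕ} (f g : Fin m → Euc d) (hT : ∀ i, T (f i) = g i) :
    T ⁻¹' {x : Euc d | ∀ j, ⟪g j, x⟫ = 0} = {x : Euc d | ∀ j, ⟪f j, x⟫ = 0} := by
  ext x
  simp only [Set.mem_preimage, Set.mem_setOf_eq]
  constructor <;> intro h j
  · have := h j; rwa [← hT j, T.inner_map_map] at this
  · rw [← hT j, T.inner_map_map]; exact h j

lemma meas_S {d m : ℕ} (g : Fin m → Euc d) : MeasurableSet {x : Euc d | ∀ j, ⟪g j, x⟫ = 0} := by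
  have : {x : Euc d | ∀ j, ⟪g j, x⟫ = 0} = ⋂ j, {x : Euc d | ⟪g j, x⟫ = 0} := by ext x; simp
  rw [this]; exact MeasurableSet.iInter fun j => meas_inner_zero _

lemma chain_step {d : ℕ} (Q : Measure (Euc d)) [IsProbabilityMeasure Q]
    (hinv : ∀ f : Euc d ≃ₗᵢ[ℝ] Euc d, Q.map f = Q)
    {k : ℕ} (hk1 : 1 ≤ k) (hkd : k < d) :
    Q (ZZ d k) = Q (ZZ d (k+1)) := by
  have hd0 : (0:ℕ) < d := lt_of_le_of_lt (Nat.zero_le k) hkd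
  set i0 : Fin d := ⟨0, hd0⟩ with hi0def
  set ik : Fin d := ⟨k, hkd⟩ with hikdef
  have hi0k : i0 ≠ ik := by simp [hi0def, hikdef, Fin.ext_iff]; omega
  set f : Fin k → Euc d := fun j => ee (Fin.castLE hkd.le j) with hf
  have horthf : Orthonormal ℝ f := orth_ee.comp _ (Fin.castLE_injective hkd.le)
  set w : ℝ → Euc d := fun t => Real.cos t • ee i0 + Real.sin t • ee ik with hw
  set g : ℝ → Fin k → Euc d := fun t j => if (j:ℕ) = 0 then w t else f j with hg
  have hip : ∀ t (z : Euc d), ⟪w t, z⟫ = Real.cos t * ⟪ee i0, z⟫ + Real.sin t * ⟪ee ik, z⟫ := by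
    intro t z
    simp only [hw, inner_add_left, real_inner_smul_left]
  have hipr : ∀ t (z : Euc d), ⟪z, w t⟫ = Real.cos t * ⟪z, ee i0⟫ + Real.sin t * ⟪z, ee ik⟫ := by
    intro t z
    simp only [hw, inner_add_right, real_inner_smul_right]
  have hcast0 : ∀ j : Fin k, (j:ℕ) ≠ 0 → (Fin.castLE hkd.le j) ≠ i0 := by
    intro j hj h
    exact hj (by simpa [hi0def, Fin.ext_iff] using h)
  have hcastk : ∀ j : Fin k, (Fin.castLE hkd.le j) ≠ ik := by
    intro j h
    have := j.2
    rw [Fin.ext_iff] at h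
    simp only [Fin.coe_castLE] at h
    have h' : (j:ℕ) = k := by simpa [hikdef] using h
    omega
  have horthg : ∀ t, Orthonormal ℝ (g t) := by
    intro t
    rw [orthonormal_iff_ite]
    intro i j
    by_cases hi : (i:ℕ) = 0 <;> by_cases hj : (j:ℕ) = 0
    · have hij : i = j := by rw [Fin.ext_iff, hi, hj]
      subst hij
      simp only [hg, if_pos hi, if_pos rfl]
      rw [hip, hipr, hipr, inner_ee, inner_ee, inner_ee, inner_ee,
        if_pos rfl, if_pos rfl, if_neg hi0k, if_neg (Ne.symm hi0k)]
      norm_num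
      nlinarith [Real.sin_sq_add_cos_sq t]
    · have hne : i ≠ j := fun h => hj (h ▸ hi)
      simp only [hg, if_pos hi, if_neg hj, if_neg hne, hf]
      rw [hip, inner_ee, inner_ee, if_neg (fun h => hcast0 j hj h.symm),
        if_neg (fun h => hcastk j h.symm)]
      ring
    · have hne : i ≠ j := fun h => hi (h ▸ hj)
      simp only [hg, if_pos hj, if_neg hi, if_neg hne, hf]
      rw [hipr, inner_ee, inner_ee, if_neg (hcast0 i hi), if_neg (hcastk i)]
      ring
    · have hite : ∀ c : Prop, [Decidable c] → True := fun _ _ => trivial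
      simp only [hg, if_neg hi, if_neg hj, hf]
      have := orthonormal_iff_ite.mp horthf i j
      rw [hf] at this
      exact this
  set A : ℝ → Set (Euc d) := fun t => {x : Euc d | ∀ j, ⟪g t j, x⟫ = 0} with hA
  have hmeasA : ∀ t, MeasurableSet (A t) := fun t => meas_S (g t)
  have hQA : ∀ t, Q (A t) = Q (ZZ d k) := by
    intro t
    obtain ⟨T, hT⟩ := lemC hkd.le f (g t) horthf (horthg t)
    have h1 : T ⁻¹' (A t) = {x : Euc d | ∀ j, ⟪f j, x⟫ = 0} := S_transport T f (g t) hT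
    have h2 : {x : Euc d | ∀ j, ⟪f j, x⟫ = 0} = ZZ d k := by
      ext x
      simp only [Set.mem_setOf_eq, ZZ, hf]
      constructor
      · intro h i hik
        have h2 := h ⟨i, hik⟩
        have h3 : Fin.castLE hkd.le ⟨(i:ℕ), hik⟩ = i := by
          rw [Fin.ext_iff]; simp
        rwa [h3] at h2
      · intro h j
        exact h _ (by simpa using j.2)
    rw [← Qpre Q hinv T (meas_S (g t)), h1, h2]
  have hZsub : ∀ t, ZZ d (k+1) ⊆ A t := by
    intro t x hx j
    show ⟪g t j, x⟫ = 0
    by_cases hj : (j:ℕ) = 0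
    · simp only [hg, if_pos hj]
      rw [hip, hx i0 (by simp [hi0def]), hx ik (by simp [hikdef])]
      ring
    · simp only [hg, if_neg hj, hf]
      exact hx _ (by rw [Fin.coe_castLE]; omega)
  have hInt : ∀ s t : ℝ, Real.sin (s - t) ≠ 0 → A s ∩ A t ⊆ ZZ d (k+1) := by
    intro s t hst x hx
    obtain ⟨hxs, hxt⟩ := hx
    have e0s : ⟪g s ⟨0, hk1⟩, x⟫ = 0 := hxs ⟨0, hk1⟩
    have e0t : ⟪g t ⟨0, hk1⟩, x⟫ = 0 := hxt ⟨0, hk1⟩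
    simp only [hg, if_pos rfl] at e0s e0t
    rw [hip] at e0s e0t
    set a := ⟪ee i0, x⟫ with hadef
    set b := ⟪ee ik, x⟫ with hbdef
    have ha : a = 0 := by
      have h1 : Real.sin (s - t) * a = 0 := by
        rw [Real.sin_sub]; linear_combination Real.sin s * e0t - Real.sin t * e0s
      exact (mul_eq_zero.mp h1).resolve_left hst
    have hb : b = 0 := by
      have h1 : Real.sin (s - t) * b = 0 := by
        rw [Real.sin_sub]; linear_combination Real.cos t * e0s - Real.cos s * e0t
      exact (mul_eq_zero.mp h1).resolve_left hst
    intro i hik1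
    by_cases hi0 : (i:ℕ) = 0
    · have : i = i0 := by rw [Fin.ext_iff, hi0]
      rw [this]; exact ha
    · by_cases hik' : (i:ℕ) = k
      · have : i = ik := by rw [Fin.ext_iff, hik']
        rw [this]; exact hb
      · have hilt : (i:ℕ) < k := by omega
        have h2 : ⟪g s ⟨(i:ℕ), hilt⟩, x⟫ = 0 := hxs ⟨(i:ℕ), hilt⟩
        simp only [hg, if_neg hi0, hf] at h2
        have h3 : Fin.castLE hkd.le ⟨(i:ℕ), hilt⟩ = i := by
          rw [Fin.ext_iff]; simp
        rwa [h3] at h2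
  set ts : ℕ → ℝ := fun n => Real.pi / (2 * (n + 2)) with hts
  have hts_mem : ∀ n : ℕ, 0 < ts n ∧ ts n < Real.pi / 2 := by
    intro n
    have hpi := Real.pi_pos
    constructor
    · apply div_pos hpi; positivity
    · rw [div_lt_div_iff₀ (by positivity) (by norm_num)]
      have hn : (0:ℝ) ≤ (n:ℝ) := Nat.cast_nonneg n
      nlinarith
  have hts_inj : Function.Injective ts := by
    intro m n h
    have hpi := Real.pi_pos
    simp only [hts] at h
    rw [div_eq_div_iff (by positivity) (by positivity)] at h
    have hm : (0:ℝ) ≤ (m:ℝ) := Nat.cast_nonneg m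
    have hn : (0:ℝ) ≤ (n:ℝ) := Nat.cast_nonneg n
    have : (m:ℝ) = n := by nlinarith
    exact_mod_cast this
  have hsin : ∀ m n : ℕ, m ≠ n → Real.sin (ts m - ts n) ≠ 0 := by
    intro m n hmn
    have h1 := hts_mem m
    have h2 := hts_mem n
    have hpi := Real.pi_pos
    have hne : ts m ≠ ts n := fun h => hmn (hts_inj h)
    rcases lt_or_gt_of_ne hne with h | h
    · have hgt : Real.sin (ts n - ts m) > 0 :=
        Real.sin_pos_of_pos_of_lt_pi (by linarith) (by linarith)
      rw [← neg_sub, Real.sin_neg]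
      intro hz
      rw [neg_eq_zero] at hz
      linarith
    · have hgt : Real.sin (ts m - ts n) > 0 :=
        Real.sin_pos_of_pos_of_lt_pi (by linarith) (by linarith)
      linarith
  set B : ℕ → Set (Euc d) := fun n => A (ts n) \ ZZ d (k+1) with hB
  have hmeasB : ∀ n, MeasurableSet (B n) := fun n => (hmeasA _).diff (meas_ZZ d (k+1))
  have hdisj : Pairwise (Function.onFun Disjoint B) := by
    intro m n hmn
    rw [Function.onFun, Set.disjoint_left]
    rintro x ⟨hxm, hxm'⟩ ⟨hxn, _⟩
    exact hxm' (hInt (ts m) (ts n) (hsin m n hmn) ⟨hxm, hxn⟩)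
  have hQB : ∀ n, Q (B n) = Q (ZZ d k) - Q (ZZ d (k+1)) := by
    intro n
    rw [hB]
    rw [measure_diff (hZsub (ts n)) (meas_ZZ d (k+1)).nullMeasurableSet (measure_ne_top Q _)]
    rw [hQA]
  have hsum : ∑' n : ℕ, Q (B n) ≤ 1 := by
    rw [← measure_iUnion hdisj hmeasB]
    exact le_trans (measure_mono (Set.subset_univ _)) (by simp)
  have hc0 : Q (ZZ d k) - Q (ZZ d (k+1)) = 0 := by
    by_contra hc
    rw [tsum_congr hQB, ENNReal.tsum_const_eq_top_of_ne_zero hc] at hsum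
    simp at hsum
  have hle : Q (ZZ d k) ≤ Q (ZZ d (k+1)) := by
    rwa [tsub_eq_zero_iff_le] at hc0
  have hge : Q (ZZ d (k+1)) ≤ Q (ZZ d k) :=
    measure_mono (fun x hx i hik => hx i (lt_of_lt_of_le hik (Nat.le_succ k)))
  exact le_antisymm hle hge

-- single unit vector case
lemma lemB1 {d : ℕ} (hd : 1 ≤ d) (a a' : Euc d) (ha : ‖a‖ = 1) (ha' : ‖a'‖ = 1) :
    ∃ T : Euc d ≃ₗᵢ[ℝ] Euc d, T a = a' := by
  have h1 : ∀ z : Euc d, ‖z‖ = 1 → Orthonormal ℝ (fun _ : Fin 1 => z) := by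
    intro z hz
    rw [orthonormal_iff_ite]
    intro i j
    rw [Subsingleton.elim i j, if_pos rfl, real_inner_self_eq_norm_mul_norm, hz]
    norm_num
  obtain ⟨T, hT⟩ := lemC hd _ _ (h1 a ha) (h1 a' ha')
  exact ⟨T, hT 0⟩

lemma lemB {d : ℕ} (hd : 2 ≤ d) (a b a' b' : Euc d)
    (ha : ‖a‖ = 1) (hb : ‖b‖ = 1) (ha' : ‖a'‖ = 1) (hb' : ‖b'‖ = 1)
    (hin : ⟪a, b⟫ = ⟪a', b'⟫) :
    ∃ T : Euc d ≃ₗᵢ[ℝ] Euc d, T a = a' ∧ T b = b' := by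
  set c : ℝ := ⟪a, b⟫ with hc
  have hialt : ⟪a', b'⟫ = c := hin.symm
  have hcle : |c| ≤ 1 := by
    have := abs_real_inner_le_norm a b
    rw [ha, hb, mul_one] at this
    exact hc ▸ this
  by_cases h1 : c = 1
  · have hba : b = a := by
      have := inner_eq_one_iff_of_norm_eq_one ha hb |>.mp (hc ▸ h1 ▸ rfl : ⟪a,b⟫ = 1)
      exact this.symm
    have hba' : b' = a' := by
      have := inner_eq_one_iff_of_norm_eq_one ha' hb' |>.mp (by rw [hialt]; exact h1)
      exact this.symm
    obtain ⟨T, hT⟩ := lemB1 (by omega) a a' ha ha'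
    exact ⟨T, hT, by rw [hba, hba', hT]⟩
  by_cases h2 : c = -1
  · have hba : b = -a := by
      have h3 : ⟪a, -b⟫ = 1 := by rw [inner_neg_right]; rw [← hc]; rw [h2]; norm_num
      have h4 := inner_eq_one_iff_of_norm_eq_one ha (by rw [norm_neg]; exact hb) |>.mp h3
      rw [h4]; simp
    have hba' : b' = -a' := by
      have h3 : ⟪a', -b'⟫ = 1 := by rw [inner_neg_right, hialt, h2]; norm_num
      have h4 := inner_eq_one_iff_of_norm_eq_one ha' (by rw [norm_neg]; exact hb') |>.mp h3
      rw [h4]; simp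
    obtain ⟨T, hT⟩ := lemB1 (by omega) a a' ha ha'
    refine ⟨T, hT, ?_⟩
    rw [hba, hba', map_neg, hT]
  -- now |c| < 1
  have hclt : c^2 < 1 := by
    rcases lt_or_eq_of_le hcle with h | h
    · nlinarith [abs_nonneg c, sq_abs c, abs_nonneg c]
    · rcases abs_eq (by norm_num : (0:ℝ) ≤ 1) |>.mp h with h | h
      · exact absurd h h1
      · exact absurd h h2
  set s : ℝ := Real.sqrt (1 - c^2) with hs
  have hs_pos : 0 < s := Real.sqrt_pos.mpr (by linarith)
  have hs_sq : s^2 = 1 - c^2 := Real.sq_sqrt (by linarith)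
  have key : ∀ p q : Euc d, ‖p‖ = 1 → ‖q‖ = 1 → ⟪p, q⟫ = c →
      Orthonormal ℝ ![p, s⁻¹ • (q - c • p)] ∧ q = c • p + s • (s⁻¹ • (q - c • p)) := by
    intro p q hp hq hpq
    have hpp : ⟪p, p⟫ = 1 := by rw [real_inner_self_eq_norm_mul_norm, hp]; norm_num
    have hqq : ⟪q, q⟫ = 1 := by rw [real_inner_self_eq_norm_mul_norm, hq]; norm_num
    have hqp : ⟪q, p⟫ = c := by rw [real_inner_comm]; exact hpq
    have hqcp : ⟪q - c • p, q - c • p⟫ = 1 - c^2 := by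
      rw [inner_sub_left, inner_sub_right, inner_sub_right, real_inner_smul_left,
        real_inner_smul_left, real_inner_smul_right, real_inner_smul_right, hpp, hqq, hpq, hqp]
      ring
    have h01 : ⟪p, s⁻¹ • (q - c • p)⟫ = 0 := by
      rw [real_inner_smul_right, inner_sub_right, real_inner_smul_right, hpq, hpp]
      ring
    have h10 : ⟪s⁻¹ • (q - c • p), p⟫ = 0 := by
      rw [real_inner_smul_left, inner_sub_left, real_inner_smul_left, hqp, hpp]
      ring
    have h11 : ⟪s⁻¹ • (q - c • p), s⁻¹ • (q - c • p)⟫ = 1 := by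
      rw [real_inner_smul_left, real_inner_smul_right, hqcp, ← hs_sq]
      rw [sq]
      field_simp
    constructor
    · rw [orthonormal_iff_ite]
      intro i j
      fin_cases i <;> fin_cases j <;>
        simp only [Matrix.cons_val_zero, Matrix.cons_val_one, Matrix.head_cons,
          hpp, h01, h10, h11, Fin.mk_zero, Fin.mk_one] <;> norm_num
    · rw [smul_smul, mul_inv_cancel₀ (ne_of_gt hs_pos), one_smul]
      abel
  obtain ⟨horth, hdecomp⟩ := key a b ha hb rfl
  obtain ⟨horth', hdecomp'⟩ := key a' b' ha' hb' hialt
  obtain ⟨T, hT⟩ := lemC hd _ _ horth horth'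
  have hT0 := hT 0
  have hT1 := hT 1
  simp only [Matrix.cons_val_zero, Matrix.cons_val_one, Matrix.head_cons] at hT0 hT1
  refine ⟨T, hT0, ?_⟩
  rw [hdecomp, map_add, LinearIsometryEquiv.map_smul, LinearIsometryEquiv.map_smul, hT0, hT1, ← hdecomp']

lemma ZZ_top {d : ℕ} : ZZ d d = {0} := by
  ext x
  simp only [ZZ, Set.mem_setOf_eq, Set.mem_singleton_iff]
  constructor
  · intro h
    ext i
    have := h i i.2
    rwa [ee, EuclideanSpace.inner_single_left, map_one, one_mul] at this
  · intro h i _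
    rw [h, inner_zero_right]

lemma null_Z1 {d : ℕ} (hd : 1 ≤ d) (Q : Measure (Euc d)) [IsProbabilityMeasure Q]
    (hinv : ∀ f : Euc d ≃ₗᵢ[ℝ] Euc d, Q.map f = Q) (h0 : Q {0} = 0) :
    Q (ZZ d 1) = 0 := by
  have key : ∀ m k : ℕ, 1 ≤ k → k + m = d → Q (ZZ d k) = 0 := by
    intro m
    induction m with
    | zero =>
      intro k hk hkd
      have : k = d := by omega
      rw [this, ZZ_top]
      exact h0
    | succ n ih =>
      intro k hk hkd
      rw [chain_step Q hinv hk (by omega)]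
      exact ih (k+1) (by omega) (by omega)
  exact key (d - 1) 1 le_rfl (by omega)

lemma hyper_null {d : ℕ} (hd : 1 ≤ d) (Q : Measure (Euc d)) [IsProbabilityMeasure Q]
    (hinv : ∀ f : Euc d ≃ₗᵢ[ℝ] Euc d, Q.map f = Q) (h0 : Q {0} = 0)
    {w : Euc d} (hw : w ≠ 0) :
    Q {x : Euc d | ⟪w, x⟫ = 0} = 0 := by
  have hd0 : 0 < d := hd
  set w' : Euc d := ‖w‖⁻¹ • w with hw'
  have hw'n : ‖w'‖ = 1 := norm_smul_inv_norm hw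
  have hsets : {x : Euc d | ⟪w, x⟫ = 0} = {x : Euc d | ⟪w', x⟫ = 0} := by
    ext x
    simp only [Set.mem_setOf_eq, hw', real_inner_smul_left]
    constructor
    · intro h; rw [h]; ring
    · intro h
      rcases mul_eq_zero.mp h with h | h
      · exact absurd h (inv_ne_zero (norm_ne_zero_iff.mpr hw))
      · exact h
  have hee : ‖ee (⟨0, hd0⟩ : Fin d)‖ = 1 := by
    have := inner_ee (⟨0, hd0⟩ : Fin d) ⟨0, hd0⟩
    rw [if_pos rfl, real_inner_self_eq_norm_mul_norm] at this
    nlinarith [norm_nonneg (ee (⟨0, hd0⟩ : Fin d))]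
  obtain ⟨T, hT⟩ := lemB1 hd (ee ⟨0, hd0⟩) w' hee hw'n
  have hpre : T ⁻¹' {x : Euc d | ⟪w', x⟫ = 0} = ZZ d 1 := by
    ext x
    simp only [Set.mem_preimage, Set.mem_setOf_eq, ZZ]
    constructor
    · intro h i hi
      have hi0 : i = ⟨0, hd0⟩ := by
        rw [Fin.ext_iff]
        simpa using hi
      rw [hi0]
      rw [← hT, T.inner_map_map] at h
      exact h
    · intro h
      rw [← hT, T.inner_map_map]
      exact h ⟨0, hd0⟩ (by simp)
  rw [hsets, ← Qpre Q hinv T (meas_inner_zero w'), hpre]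
  exact null_Z1 hd Q hinv h0

set_option maxHeartbeats 1000000 in
theorem stmt_5 (d : ℕ) (hd : 2 ≤ d)
    (Q : Measure (EuclideanSpace ℝ (Fin d))) [IsProbabilityMeasure Q]
    (hinv : ∀ f : EuclideanSpace ℝ (Fin d) ≃ₗᵢ[ℝ] EuclideanSpace ℝ (Fin d),
      Q.map f = Q)
    (h0 : Q {0} = 0)
    (u v : EuclideanSpace ℝ (Fin d)) (hu : u ≠ 0) (hv : v ≠ 0) :
    (Q {x | ⟪u, x⟫ * ⟪v, x⟫ < 0}).toReal = InnerProductGeometry.angle u v / Real.pi := by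
  have hd0 : 0 < d := by omega
  have hd1 : 1 < d := by omega
  have hpi := Real.pi_pos
  set e0 : Euc d := ee ⟨0, hd0⟩ with he0
  set e1 : Euc d := ee ⟨1, hd1⟩ with he1
  have h00 : ⟪e0, e0⟫ = (1:ℝ) := by rw [he0, inner_ee, if_pos rfl]
  have h11 : ⟪e1, e1⟫ = (1:ℝ) := by rw [he1, inner_ee, if_pos rfl]
  have hne01 : (⟨0, hd0⟩ : Fin d) ≠ ⟨1, hd1⟩ := by simp [Fin.ext_iff]
  have h01 : ⟪e0, e1⟫ = (0:ℝ) := by rw [he0, he1, inner_ee, if_neg hne01]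
  have h10 : ⟪e1, e0⟫ = (0:ℝ) := by rw [he0, he1, inner_ee, if_neg (Ne.symm hne01)]
  set cc : ℝ → Euc d := fun t => Real.cos t • e0 + Real.sin t • e1 with hccdef
  have hinner_cc : ∀ s t : ℝ, ⟪cc s, cc t⟫ = Real.cos (s - t) := by
    intro s t
    rw [hccdef]
    simp only [inner_add_left, inner_add_right, real_inner_smul_left, real_inner_smul_right,
      h00, h11, h01, h10, Real.cos_sub]
    ring
  have hnorm_cc : ∀ t, ‖cc t‖ = 1 := by
    intro t
    have h := hinner_cc t t
    rw [sub_self, Real.cos_zero, real_inner_self_eq_norm_mul_norm] at h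
    nlinarith [norm_nonneg (cc t)]
  have hcc_ne : ∀ t, cc t ≠ 0 := by
    intro t h
    have := hnorm_cc t
    rw [h, norm_zero] at this
    norm_num at this
  have hphi : ∀ (r : ℝ) (x : Euc d), ⟪cc r, x⟫ = Real.cos r * ⟪e0, x⟫ + Real.sin r * ⟪e1, x⟫ := by
    intro r x
    rw [hccdef]
    simp only [inner_add_left, real_inner_smul_left]
  -- isometry invariance of disagreement sets
  have hDiso : ∀ a b a' b' : Euc d, ‖a‖ = 1 → ‖b‖ = 1 → ‖a'‖ = 1 → ‖b'‖ = 1 →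
      ⟪a, b⟫ = ⟪a', b'⟫ →
      Q {x : Euc d | ⟪a, x⟫ * ⟪b, x⟫ < 0} = Q {x : Euc d | ⟪a', x⟫ * ⟪b', x⟫ < 0} := by
    intro a b a' b' ha hb ha' hb' hab
    obtain ⟨T, hTa, hTb⟩ := lemB hd a b a' b' ha hb ha' hb' hab
    have hpre : T ⁻¹' {x : Euc d | ⟪a', x⟫ * ⟪b', x⟫ < 0} = {x : Euc d | ⟪a, x⟫ * ⟪b, x⟫ < 0} := by
      ext x
      simp only [Set.mem_preimage, Set.mem_setOf_eq]
      rw [← hTa, ← hTb, T.inner_map_map, T.inner_map_map]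
    rw [← hpre, Qpre Q hinv T (meas_inner_lt a' b')]
  set hh : ℝ → ENNReal := fun t => Q {x : Euc d | ⟪cc 0, x⟫ * ⟪cc t, x⟫ < 0} with hhdef
  have hhfin : ∀ t, hh t ≠ ⊤ := fun t => measure_ne_top Q _
  -- h 0 = 0
  have hh0 : hh 0 = 0 := by
    rw [hhdef]
    convert measure_empty (μ := Q)
    ext x
    simp only [Set.mem_setOf_eq, Set.mem_empty_iff_false, iff_false, not_lt]
    exact mul_self_nonneg _
  -- h pi = 1
  have hhpi : hh Real.pi = 1 := by
    have hccpi : cc Real.pi = -(cc 0) := by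
      rw [hccdef]
      simp [Real.cos_pi, Real.sin_pi, Real.cos_zero, Real.sin_zero]
    have hset : {x : Euc d | ⟪cc 0, x⟫ * ⟪cc Real.pi, x⟫ < 0} = {x : Euc d | ⟪cc 0, x⟫ = 0}ᶜ := by
      ext x
      rw [hccpi]
      simp only [Set.mem_setOf_eq, Set.mem_compl_iff, inner_neg_left]
      constructor
      · intro h h2
        rw [h2] at h
        norm_num at h
      · intro h
        have h2 : ⟪cc 0, x⟫ * ⟪cc 0, x⟫ > 0 := by
          rcases lt_or_gt_of_ne h with h' | h'
          · exact mul_pos_of_neg_of_neg h' h'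
          · exact mul_pos h' h'
        nlinarith
    rw [hhdef]
    simp only [hset]
    rw [measure_compl (meas_inner_zero (cc 0)) (measure_ne_top Q _)]
    rw [hyper_null (by omega) Q hinv h0 (hcc_ne 0)]
    simp
  -- additivity
  have hadd : ∀ s t : ℝ, 0 ≤ s → 0 ≤ t → s + t ≤ Real.pi → hh (s + t) = hh s + hh t := by
    intro s t hs ht hst
    have hsins : 0 ≤ Real.sin s := Real.sin_nonneg_of_nonneg_of_le_pi hs (by linarith)
    have hsint : 0 ≤ Real.sin t := Real.sin_nonneg_of_nonneg_of_le_pi ht (by linarith)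
    have hsinst : 0 ≤ Real.sin (s + t) := Real.sin_nonneg_of_nonneg_of_le_pi (by linarith) hst
    set E1 := {x : Euc d | ⟪cc 0, x⟫ * ⟪cc s, x⟫ < 0} with hE1
    set E2 := {x : Euc d | ⟪cc s, x⟫ * ⟪cc (s + t), x⟫ < 0} with hE2
    set E3 := {x : Euc d | ⟪cc 0, x⟫ * ⟪cc (s + t), x⟫ < 0} with hE3
    have hident : ∀ x : Euc d,
        ⟪cc s, x⟫ * Real.sin (s + t) = ⟪cc 0, x⟫ * Real.sin t + ⟪cc (s + t), x⟫ * Real.sin s := by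
      intro x
      rw [hphi, hphi, hphi, Real.sin_add, Real.cos_add, Real.sin_zero, Real.cos_zero]
      linear_combination ((inner ℝ e0 x : ℝ) * Real.sin t) * Real.sin_sq_add_cos_sq s
    have hdisj : E1 ∩ E2 = ∅ := by
      ext x
      simp only [hE1, hE2, Set.mem_inter_iff, Set.mem_setOf_eq, Set.mem_empty_iff_false,
        iff_false, not_and]
      intro h1 h2
      set p := ⟪cc 0, x⟫ with hp
      set q := ⟪cc s, x⟫ with hq
      set r := ⟪cc (s + t), x⟫ with hr
      have hcon := h2
      have hid := hident x
      rw [← hp, ← hq, ← hr] at hid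
      have key : q * q * Real.sin (s + t) = p * q * Real.sin t + q * r * Real.sin s := by
        linear_combination q * hid
      have hA : p * q * Real.sin t ≤ 0 := mul_nonpos_of_nonpos_of_nonneg h1.le hsint
      have hB : q * r * Real.sin s ≤ 0 := mul_nonpos_of_nonpos_of_nonneg hcon.le hsins
      have hL : 0 ≤ q * q * Real.sin (s + t) := mul_nonneg (mul_self_nonneg q) hsinst
      have hA0 : p * q * Real.sin t = 0 := by linarith
      have hB0 : q * r * Real.sin s = 0 := by linarith
      have hsint0 : Real.sin t = 0 := by
        rcases mul_eq_zero.mp hA0 with h | h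
        · exact absurd h (ne_of_lt h1)
        · exact h
      have hsins0 : Real.sin s = 0 := by
        rcases mul_eq_zero.mp hB0 with h | h
        · exact absurd h (ne_of_lt hcon)
        · exact h
      by_cases hs0 : s = 0
      · -- then p = q : contradiction with h1
        rw [hs0] at hq
        have hpq2 : p = q := by rw [hp, hq]
        rw [hpq2] at h1
        exact absurd h1 (not_lt.mpr (mul_self_nonneg q))
      · have hslt : s < Real.pi := by
          rcases lt_or_eq_of_le (by linarith : s ≤ Real.pi) with h | h
          · exact h
          · -- s = pi, then t = 0, then q*r = q*q >= 0 contra hcon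
            exfalso
            have ht0 : t = 0 := by linarith
            rw [ht0, add_zero] at hr
            have hqr2 : q = r := by rw [hq, hr]
            rw [← hqr2] at hcon
            exact absurd hcon (not_lt.mpr (mul_self_nonneg q))
        have : s = 0 := by
          have := Real.sin_eq_zero_iff_of_lt_of_lt (by linarith) hslt |>.mp hsins0
          exact this
        exact hs0 this
    -- null set
    set M := {x : Euc d | ⟪cc 0, x⟫ = 0} ∪ {x : Euc d | ⟪cc s, x⟫ = 0} ∪
      {x : Euc d | ⟪cc (s + t), x⟫ = 0} with hM
    have hQM : Q M = 0 := by
      rw [hM]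
      refine measure_union_null (measure_union_null ?_ ?_) ?_ <;>
        exact hyper_null (by omega) Q hinv h0 (hcc_ne _)
    have hsub3 : E3 \ M ⊆ E1 ∪ E2 := by
      rintro x ⟨hx3, hxM⟩
      simp only [hM, Set.mem_union, Set.mem_setOf_eq, not_or] at hxM
      obtain ⟨⟨hp0, hq0⟩, hr0⟩ := hxM
      simp only [hE1, hE2, hE3, Set.mem_union, Set.mem_setOf_eq] at hx3 ⊢
      by_contra hcon
      rw [not_or, not_lt, not_lt] at hcon
      obtain ⟨hc1, hc2⟩ := hcon
      have hq2 : 0 < ⟪cc s, x⟫ * ⟪cc s, x⟫ := by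
        rcases lt_or_gt_of_ne hq0 with h | h
        · exact mul_pos_of_neg_of_neg h h
        · exact mul_pos h h
      nlinarith [hx3, hc1, hc2, hq2]
    have hsub1 : E1 \ M ⊆ E3 := by
      rintro x ⟨hx1, hxM⟩
      simp only [hM, Set.mem_union, Set.mem_setOf_eq, not_or] at hxM
      obtain ⟨⟨hp0, hq0⟩, hr0⟩ := hxM
      have hx2 : x ∉ E2 := by
        intro hx2
        have : x ∈ E1 ∩ E2 := ⟨hx1, hx2⟩
        rw [hdisj] at this
        exact this
      simp only [hE1, Set.mem_setOf_eq] at hx1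
      simp only [hE2, Set.mem_setOf_eq, not_lt] at hx2
      simp only [hE3, Set.mem_setOf_eq]
      -- pq < 0, qr >= 0, r != 0  => pr < 0
      have hr2 : 0 < ⟪cc (s+t), x⟫ * ⟪cc (s+t), x⟫ := by
        rcases lt_or_gt_of_ne hr0 with h | h
        · exact mul_pos_of_neg_of_neg h h
        · exact mul_pos h h
      nlinarith [hx1, hx2, hr2]
    have hsub2 : E2 \ M ⊆ E3 := by
      rintro x ⟨hx2, hxM⟩
      simp only [hM, Set.mem_union, Set.mem_setOf_eq, not_or] at hxM
      obtain ⟨⟨hp0, hq0⟩, hr0⟩ := hxM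
      simp only [hE2, Set.mem_setOf_eq] at hx2
      simp only [hE3, Set.mem_setOf_eq]
      have hp2 : 0 < ⟪cc 0, x⟫ * ⟪cc 0, x⟫ := by
        rcases lt_or_gt_of_ne hp0 with h | h
        · exact mul_pos_of_neg_of_neg h h
        · exact mul_pos h h
      by_contra hcon
      rw [not_lt] at hcon
      -- qr < 0, pr >= 0, p != 0 => pq < 0, so x in E1 cap E2, contradiction
      have hx1 : x ∈ E1 := by
        simp only [hE1, Set.mem_setOf_eq]
        nlinarith [hx2, hcon, hp2]
      have : x ∈ E1 ∩ E2 := ⟨hx1, hx2⟩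
      rw [hdisj] at this
      exact this
    have hmeasE1 : MeasurableSet E1 := meas_inner_lt _ _
    have hmeasE2 : MeasurableSet E2 := meas_inner_lt _ _
    have hQ3 : Q E3 = Q E1 + Q E2 := by
      have hle : Q E3 ≤ Q E1 + Q E2 := by
        calc Q E3 = Q (E3 \ M) := (measure_diff_null hQM).symm
        _ ≤ Q (E1 ∪ E2) := measure_mono hsub3
        _ ≤ Q E1 + Q E2 := measure_union_le _ _
      have hge : Q E1 + Q E2 ≤ Q E3 := by
        have hdisj' : Disjoint E1 E2 := Set.disjoint_iff_inter_eq_empty.mpr hdisj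
        calc Q E1 + Q E2 = Q (E1 ∪ E2) := (measure_union hdisj' hmeasE2).symm
        _ = Q ((E1 ∪ E2) \ M) := (measure_diff_null hQM).symm
        _ ≤ Q E3 := by
            refine measure_mono ?_
            rw [Set.union_diff_distrib]
            exact Set.union_subset hsub1 hsub2
      exact le_antisymm hle hge
    -- identify Q E2 with hh t
    have hQE2 : Q E2 = hh t := by
      rw [hE2, hhdef]
      apply hDiso _ _ _ _ (hnorm_cc _) (hnorm_cc _) (hnorm_cc _) (hnorm_cc _)
      rw [hinner_cc, hinner_cc]
      congr 1
      ring
    have hQE1 : Q E1 = hh s := rfl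
    have hQE3 : Q E3 = hh (s + t) := rfl
    rw [← hQE3, hQ3, hQE1, hQE2]
  -- pass to real-valued function
  set h : ℝ → ℝ := fun t => (hh t).toReal with hhr
  have haddR : ∀ s t : ℝ, 0 ≤ s → 0 ≤ t → s + t ≤ Real.pi → h (s + t) = h s + h t := by
    intro s t hs ht hst
    rw [hhr]
    simp only
    rw [hadd s t hs ht hst, ENNReal.toReal_add (hhfin s) (hhfin t)]
  have hnonneg : ∀ t, 0 ≤ h t := fun t => ENNReal.toReal_nonneg
  have h0R : h 0 = 0 := by rw [hhr]; simp only; rw [hh0]; simp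
  have hpiR : h Real.pi = 1 := by rw [hhr]; simp only; rw [hhpi]; simp
  have hmono : ∀ s t : ℝ, 0 ≤ s → s ≤ t → t ≤ Real.pi → h s ≤ h t := by
    intro s t hs hstle htpi
    have heq : h t = h s + h (t - s) := by
      have := haddR s (t - s) hs (by linarith) (by linarith)
      rwa [add_sub_cancel] at this
    linarith [hnonneg (t - s)]
  have hmul : ∀ n : ℕ, ∀ t : ℝ, 0 ≤ t → (n : ℝ) * t ≤ Real.pi → h ((n : ℝ) * t) = n * h t := by
    intro n
    induction n with
    | zero => intro t ht hle; simp [h0R]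
    | succ n ih =>
      intro t ht hle
      have hcast : ((n + 1 : ℕ) : ℝ) * t = (n : ℝ) * t + t := by push_cast; ring
      have hle' : (n : ℝ) * t ≤ Real.pi := by
        have : (n : ℝ) * t ≤ ((n + 1 : ℕ) : ℝ) * t := by push_cast; nlinarith
        linarith
      rw [hcast, haddR ((n : ℝ) * t) t (by positivity) ht (by rw [← hcast]; exact hle),
        ih t ht hle']
      push_cast
      ring
  have hfrac : ∀ n : ℕ, 1 ≤ n → h (Real.pi / n) = 1 / n := by
    intro n hn
    have hn' : (0:ℝ) < n := by exact_mod_cast hn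
    have hmuln := hmul n (Real.pi / n) (by positivity)
      (le_of_eq (by field_simp))
    rw [show (n:ℝ) * (Real.pi / n) = Real.pi by field_simp, hpiR] at hmuln
    field_simp at hmuln ⊢
    linarith
  have hrat : ∀ k n : ℕ, 1 ≤ n → k ≤ n → h ((k : ℝ) * Real.pi / n) = k / n := by
    intro k n hn hkn
    have hn' : (0:ℝ) < n := by exact_mod_cast hn
    have hkn' : (k:ℝ) ≤ n := by exact_mod_cast hkn
    have h1 : (k : ℝ) * Real.pi / n = (k : ℝ) * (Real.pi / n) := by ring
    have h2 : (k : ℝ) * (Real.pi / n) ≤ Real.pi := by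
      have h3 : (k:ℝ) * (Real.pi / n) ≤ (n:ℝ) * (Real.pi / n) :=
        mul_le_mul_of_nonneg_right hkn' (by positivity)
      rw [show (n:ℝ) * (Real.pi / n) = Real.pi by field_simp] at h3
      exact h3
    rw [h1, hmul k (Real.pi / n) (by positivity) h2, hfrac n hn]
    field_simp
  -- final: h theta = theta / pi
  set θ := InnerProductGeometry.angle u v with hθ
  have hθ0 : 0 ≤ θ := InnerProductGeometry.angle_nonneg u v
  have hθpi : θ ≤ Real.pi := InnerProductGeometry.angle_le_pi u v
  have hfinal : h θ = θ / Real.pi := by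
    rcases eq_or_lt_of_le hθpi with hepi | hlt
    · rw [hepi, hpiR, div_self (ne_of_gt hpi)]
    · have key : ∀ n : ℕ, 1 ≤ n → |h θ - θ / Real.pi| ≤ 1 / n := by
        intro n hn
        have hn' : (0:ℝ) < n := by exact_mod_cast hn
        set k := Nat.floor ((n : ℝ) * θ / Real.pi) with hk
        have hk1 : (k : ℝ) ≤ (n : ℝ) * θ / Real.pi := Nat.floor_le (by positivity)
        have hk2 : (n : ℝ) * θ / Real.pi < k + 1 := Nat.lt_floor_add_one _
        have hkn : (k : ℝ) < n := by
          calc (k:ℝ) ≤ (n : ℝ) * θ / Real.pi := hk1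
          _ < n := by rw [div_lt_iff₀ hpi]; nlinarith
        have hknn : k + 1 ≤ n := by
          have : k < n := by exact_mod_cast hkn
          omega
        have hlow : (k : ℝ) * Real.pi / n ≤ θ := by
          rw [div_le_iff₀ hn']
          rw [le_div_iff₀ hpi] at hk1
          linarith
        have hhigh : θ ≤ ((k+1 : ℕ) : ℝ) * Real.pi / n := by
          rw [le_div_iff₀ hn']
          rw [div_lt_iff₀ hpi] at hk2
          push_cast
          nlinarith
        have hb1 : (k : ℝ) / n ≤ h θ := by
          rw [← hrat k n hn (by omega)]
          exact hmono _ _ (by positivity) hlow (by linarith)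
        have hb2 : h θ ≤ ((k+1:ℕ) : ℝ) / n := by
          rw [← hrat (k+1) n hn hknn]
          refine hmono _ _ hθ0 hhigh ?_
          rw [div_le_iff₀ hn']
          push_cast
          have : ((k:ℝ)+1) ≤ n := by exact_mod_cast hknn
          nlinarith
        have hb3 : (k : ℝ) / n ≤ θ / Real.pi := by
          rw [div_le_div_iff₀ hn' hpi]
          rw [le_div_iff₀ hpi] at hk1
          linarith
        have hb4 : θ / Real.pi ≤ ((k:ℝ)+1) / n := by
          rw [div_le_div_iff₀ hpi hn']
          rw [div_lt_iff₀ hpi] at hk2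
          nlinarith
        rw [abs_le]
        push_cast at hb2
        have hdiff : ((k:ℝ)+1)/(n:ℝ) - (k:ℝ)/(n:ℝ) = 1/(n:ℝ) := by field_simp; ring
        constructor <;> linarith
      by_contra hne
      have habs : 0 < |h θ - θ / Real.pi| := by
        rcases (abs_nonneg (h θ - θ / Real.pi)).lt_or_eq with h' | h'
        · exact h'
        · exfalso
          apply hne
          have := abs_eq_zero.mp h'.symm
          linarith [sub_eq_zero.mp this]
      obtain ⟨n, hn⟩ := exists_nat_one_div_lt habs
      have := key (n+1) (by omega)
      push_cast at this hn
      linarith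
  -- identify Q of the original set with hh θ
  have hQset : Q {x : Euc d | ⟪u, x⟫ * ⟪v, x⟫ < 0} = hh θ := by
    set u' : Euc d := ‖u‖⁻¹ • u with hu'
    set v' : Euc d := ‖v‖⁻¹ • v with hv'
    have hu'n : ‖u'‖ = 1 := norm_smul_inv_norm hu
    have hv'n : ‖v'‖ = 1 := norm_smul_inv_norm hv
    have hru : (0:ℝ) < ‖u‖⁻¹ := by
      rw [inv_pos]; exact norm_pos_iff.mpr hu
    have hrv : (0:ℝ) < ‖v‖⁻¹ := by
      rw [inv_pos]; exact norm_pos_iff.mpr hv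
    have hsets : {x : Euc d | ⟪u, x⟫ * ⟪v, x⟫ < 0} = {x : Euc d | ⟪u', x⟫ * ⟪v', x⟫ < 0} := by
      ext x
      simp only [Set.mem_setOf_eq, hu', hv', real_inner_smul_left]
      constructor
      · intro hlt
        have : ‖u‖⁻¹ * ‖v‖⁻¹ * (⟪u,x⟫ * ⟪v,x⟫) < 0 :=
          mul_neg_of_pos_of_neg (by positivity) hlt
        nlinarith [this]
      · intro hlt
        nlinarith [hlt, mul_pos hru hrv]
    have hcosu : ⟪u', v'⟫ = Real.cos θ := by
      rw [hθ, InnerProductGeometry.cos_angle]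
      simp only [hu', hv', real_inner_smul_left, real_inner_smul_right]
      field_simp
    have hcoscc : ⟪cc 0, cc θ⟫ = Real.cos θ := by
      rw [hinner_cc, zero_sub, Real.cos_neg]
    rw [hsets, hhdef]
    exact hDiso u' v' (cc 0) (cc θ) hu'n hv'n (hnorm_cc 0) (hnorm_cc θ) (by rw [hcosu, hcoscc])
  rw [hQset]
  exact hfinal
end

section
/- Let n and t be real numbers with n ≥ 1 and t > 0. If n ≥ 1 + 2·t·log(2t/e), then t·log(n + 1) ≤ n. -/
theorem stmt_10 (n t : ℝ) (hn : 1 ≤ n) (ht : 0 < t)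
    (h : 1 + 2 * t * Real.log (2 * t / Real.exp 1) ≤ n) :
    t * Real.log (n + 1) ≤ n := by
  have h2t : (0:ℝ) < 2 * t := by linarith
  have hx : (0:ℝ) < n + 1 := by linarith
  have hlog : Real.log (n + 1) ≤ (n + 1) / (2 * t) - 1 + Real.log (2 * t) := by
    have h1 := Real.log_le_sub_one_of_pos (show (0:ℝ) < (n + 1) / (2 * t) by positivity)
    have hdiv : Real.log ((n + 1) / (2 * t)) = Real.log (n + 1) - Real.log (2 * t) :=
      Real.log_div (ne_of_gt hx) (ne_of_gt h2t)
    linarith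
  have hle : Real.log (2 * t / Real.exp 1) = Real.log (2 * t) - 1 := by
    rw [Real.log_div (ne_of_gt h2t) (Real.exp_ne_zero 1), Real.log_exp]
  rw [hle] at h
  have hmul : t * Real.log (n + 1) ≤ t * ((n + 1) / (2 * t) - 1 + Real.log (2 * t)) :=
    mul_le_mul_of_nonneg_left hlog ht.le
  have ht' : t * ((n + 1) / (2 * t)) = (n + 1) / 2 := by
    field_simp
  nlinarith [hmul, ht']
end
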